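/- In the discrimination setting, fix δ ∈ (0,1), let p̂(δ) := δ·(1/√(1+3δ²) − 1/2) and let p^aux(δ) ∈ (0, (1−δ)/2) be the unique partiality level with τ₂*(p^aux(δ), δ) = 1. Then p̂(δ) < p^aux(δ); the functions p ↦ W(p,δ) and p ↦ I(p,δ) are continuous on [0,1); on the interval (p̂(δ), p^aux(δ)) welfare W(·,δ) is strictly decreasing while inequality I(·,δ) is strictly increasing; and both W(·,δ) and I(·,δ) are constant on [p^aux(δ), 1). -/

import Mathlib

noncomputable section

/-! Discrimination setting (Section 5.2 of the paper): `K = 2`, prior means `0`,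
prior variances `Σ⁰₁ = Σ⁰₂ = 1`, budget `T = 1`.  For discrimination level
`δ ∈ (0,1)` the politician's weights are `((1+δ)/2, (1−δ)/2)`; for partiality
level `p ∈ [0,1)` the advisor's weights are `((1−p)/2, (1+p)/2)`.

* `ah1 p δ, ah2 p δ` are the auxiliary weights `α̂₁(p,δ), α̂₂(p,δ)`.
* `tau2aux p δ` is `τ₂^aux(p,δ)` and `tau2star p δ = min{τ₂^aux(p,δ), 1}` is the
  advisor's equilibrium allocation of tests to group 2 (group 1 gets the rest).
* `omega τ₂ δ` is utilitarian welfare as a function of the allocation, and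
  `W p δ = ω(τ₂*(p,δ), δ)` is equilibrium welfare.
* `Dlt τ₂ δ` is the difference of the two groups' ex ante expected utilities and
  `Ineq p δ = |Δ(τ₂*(p,δ), δ)|` is equilibrium inequality. -/

/-- Auxiliary weight `α̂₁(p,δ)`. -/
def ah1 (p δ : ℝ) : ℝ :=
  if p < (1 - δ) / 2 then (1 / 2) * Real.sqrt ((1 + δ) * (1 - 2 * p - δ)) else 0

/-- Auxiliary weight `α̂₂(p,δ)`. -/
def ah2 (p δ : ℝ) : ℝ := (1 / 2) * Real.sqrt ((1 - δ) * (1 + 2 * p + δ))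

/-- `τ₂^aux(p,δ)`. -/
def tau2aux (p δ : ℝ) : ℝ := (2 * ah2 p δ - ah1 p δ) / (ah1 p δ + ah2 p δ)

/-- The advisor's equilibrium allocation of tests to group 2, `τ₂*(p,δ)`. -/
def tau2star (p δ : ℝ) : ℝ := min (tau2aux p δ) 1

/-- Utilitarian welfare `ω(τ₂, δ)` from splitting the budget as `(1−τ₂, τ₂)`. -/
def omega (τ2 δ : ℝ) : ℝ :=
  -3 - δ ^ 2 + ((1 + δ) ^ 2 / 2 + (1 + δ) * (1 - τ2)) / (2 - τ2)
    + ((1 - δ) ^ 2 / 2 + (1 - δ) * τ2) / (1 + τ2)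

/-- Equilibrium welfare `W(p,δ)`. -/
def W (p δ : ℝ) : ℝ := omega (tau2star p δ) δ

/-- Difference `Δ(τ₂,δ)` of the two groups' ex ante expected utilities. -/
def Dlt (τ2 δ : ℝ) : ℝ :=
  (1 + δ) * (1 - τ2) / (2 - τ2) - (1 - δ) * τ2 / (1 + τ2)

/-- Equilibrium inequality `I(p,δ)`. -/
def Ineq (p δ : ℝ) : ℝ := |Dlt (tau2star p δ) δ|

/-! `τ₂^aux = 2 - 3 α̂₁ / (α̂₁ + α̂₂)` is strictly increasing in `p` on `[0, (1 - δ)/2)`, because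
`α̂₁` falls and `α̂₂` rises; it equals `1/2` at `p = 0` and `1` at `p^aux`, and `τ₂* = 1` from
`p^aux` on, which gives the constancy. On `[0, p^aux]` we have `τ₂* = τ₂^aux ∈ [1/2, 1]`, where
`ω(τ₂) = -1 - δ² - 3(1 - δ²) / (2 (2 - τ₂)(1 + τ₂))` is strictly decreasing. `Δ` is strictly
decreasing in `τ₂`, and `p̂(δ)` is exactly where `Δ(τ₂^aux(p, δ), δ)` changes sign, so beyond it
`I = -Δ` strictly increases. Continuity holds because `α̂₁ + α̂₂ > 0`. -/

open Set

variable {δ p : ℝ}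

lemma ah1_eq_sqrt (hδ : -1 ≤ δ) (p : ℝ) :
    ah1 p δ = 1 / 2 * √((1 + δ) * (1 - 2 * p - δ)) := by
  unfold ah1
  split_ifs with hp
  · rfl
  · rw [Real.sqrt_eq_zero_of_nonpos
      (mul_nonpos_of_nonneg_of_nonpos (by linarith) (by linarith [not_lt.1 hp])), mul_zero]

lemma ah1_nonneg (p δ : ℝ) : 0 ≤ ah1 p δ := by
  unfold ah1
  split_ifs <;> positivity

lemma ah1_pos (hδ : -1 < δ) (hp : p < (1 - δ) / 2) : 0 < ah1 p δ := by
  rw [ah1, if_pos hp]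
  exact mul_pos one_half_pos (Real.sqrt_pos.2 (mul_pos (by linarith) (by linarith)))

lemma ah2_pos (hδ₀ : -1 < δ) (hδ₁ : δ < 1) (hp : 0 ≤ p) : 0 < ah2 p δ :=
  mul_pos one_half_pos (Real.sqrt_pos.2 (mul_pos (by linarith) (by linarith)))

lemma four_mul_ah1_sq (hδ : -1 ≤ δ) (hp : p ≤ (1 - δ) / 2) :
    4 * ah1 p δ ^ 2 = (1 + δ) * (1 - 2 * p - δ) := by
  rw [ah1_eq_sqrt hδ, mul_pow, Real.sq_sqrt (mul_nonneg (by linarith) (by linarith))]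
  ring

lemma four_mul_ah2_sq (hδ₀ : -1 ≤ δ) (hδ₁ : δ ≤ 1) (hp : 0 ≤ p) :
    4 * ah2 p δ ^ 2 = (1 - δ) * (1 + 2 * p + δ) := by
  rw [ah2, mul_pow, Real.sq_sqrt (mul_nonneg (by linarith) (by linarith))]
  ring

lemma ah1_strictAntiOn (hδ : -1 < δ) : StrictAntiOn (ah1 · δ) (Iic ((1 - δ) / 2)) := by
  intro x _ y hy hxy
  simp only [ah1_eq_sqrt hδ.le]
  gcongr
  · exact mul_nonneg (by linarith) (by linarith [mem_Iic.1 hy])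
  · linarith

lemma ah2_strictMonoOn (hδ₀ : -1 < δ) (hδ₁ : δ < 1) : StrictMonoOn (ah2 · δ) (Ici 0) := by
  intro x hx _ _ hxy
  simp only [ah2]
  gcongr
  exact mul_nonneg (by linarith) (by linarith [mem_Ici.1 hx])

lemma tau2aux_strictMonoOn (hδ₀ : -1 < δ) (hδ₁ : δ < 1) :
    StrictMonoOn (tau2aux · δ) (Ico 0 ((1 - δ) / 2)) := by
  intro x hx y hy hxy
  have h1 : ah1 y δ < ah1 x δ := ah1_strictAntiOn hδ₀ hx.2.le hy.2.le hxy
  have h2 : ah2 x δ < ah2 y δ := ah2_strictMonoOn hδ₀ hδ₁ hx.1 hy.1 hxy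
  have hx1 := ah1_pos hδ₀ hx.2
  have hy1 := ah1_pos hδ₀ hy.2
  have hx2 := ah2_pos hδ₀ hδ₁ hx.1
  have hcross : ah1 y δ * ah2 x δ < ah1 x δ * ah2 y δ := mul_lt_mul'' h1 h2 hy1.le hx2.le
  simp only [tau2aux]
  rw [div_lt_div_iff₀ (by linarith) (by linarith)]
  nlinarith

lemma tau2aux_zero (hδ₀ : -1 < δ) (hδ₁ : δ < 1) : tau2aux 0 δ = 1 / 2 := by
  have h : ah1 0 δ = ah2 0 δ := by
    rw [ah1, if_pos (by linarith), ah2]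
    congr 2
    ring
  have := ah2_pos hδ₀ hδ₁ le_rfl
  rw [tau2aux, h]
  field_simp
  ring

lemma tau2aux_of_le (hδ₀ : -1 < δ) (hδ₁ : δ < 1) (hp : (1 - δ) / 2 ≤ p) :
    tau2aux p δ = 2 := by
  have := ah2_pos hδ₀ hδ₁ (p := p) (by linarith)
  rw [tau2aux, ah1, if_neg (not_lt.2 hp)]
  field_simp
  ring

lemma neg_one_lt_tau2aux (hδ₀ : -1 < δ) (hδ₁ : δ < 1) (hp : 0 ≤ p) : -1 < tau2aux p δ := by
  have := ah2_pos hδ₀ hδ₁ hp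
  have := ah1_nonneg p δ
  rw [tau2aux, lt_div_iff₀ (by linarith)]
  linarith

/-- `τ₂^aux = 1` means `α̂₂ = 2 α̂₁`; squaring makes this linear in `p`. -/
lemma mul_eq_of_tau2aux_eq_one (hδ₀ : -1 < δ) (hδ₁ : δ < 1) (hp₀ : 0 ≤ p)
    (hp : p < (1 - δ) / 2) (h : tau2aux p δ = 1) : p * (10 + 6 * δ) = 3 * (1 - δ ^ 2) := by
  have := ah1_pos hδ₀ hp
  have := ah2_pos hδ₀ hδ₁ hp₀
  have h1 := four_mul_ah1_sq hδ₀.le hp.le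
  have h2 := four_mul_ah2_sq hδ₀.le hδ₁.le hp₀
  rw [tau2aux, div_eq_one_iff_eq (by linarith)] at h
  have h21 : ah2 p δ = 2 * ah1 p δ := by linarith
  rw [h21] at h2
  linear_combination 4 * h1 - h2

lemma omega_eq {τ : ℝ} (h₁ : -1 < τ) (h₂ : τ < 2) :
    omega τ δ = -1 - δ ^ 2 - 3 * (1 - δ ^ 2) / 2 / ((2 - τ) * (1 + τ)) := by
  have : 2 - τ ≠ 0 := by linarith
  have : 1 + τ ≠ 0 := by linarith
  rw [omega]
  field_simp
  ring

/-- `(2 - τ) (1 + τ)` is decreasing for `τ ≥ 1/2`. -/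
lemma omega_strictAntiOn (hδ₀ : -1 < δ) (hδ₁ : δ < 1) :
    StrictAntiOn (omega · δ) (Icc (1 / 2) 1) := by
  intro a ⟨ha, _⟩ b ⟨_, hb⟩ hab
  dsimp only
  rw [omega_eq (by linarith) (by linarith), omega_eq (by linarith) (by linarith)]
  have hprod : (2 - b) * (1 + b) < (2 - a) * (1 + a) := by nlinarith
  have hc : 0 < 3 * (1 - δ ^ 2) / 2 := by nlinarith
  linarith [div_lt_div_of_pos_left hc (by nlinarith) hprod]

lemma Dlt_strictAntiOn (hδ₀ : -1 < δ) (hδ₁ : δ < 1) : StrictAntiOn (Dlt · δ) (Ioo (-1) 2) := by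
  intro a ⟨ha₁, ha₂⟩ b ⟨hb₁, hb₂⟩ hab
  have h₁ : (1 + δ) * (1 - b) / (2 - b) < (1 + δ) * (1 - a) / (2 - a) := by
    rw [div_lt_div_iff₀ (by linarith) (by linarith)]
    nlinarith [mul_pos (by linarith : (0 : ℝ) < 1 + δ) (by linarith : 0 < b - a)]
  have h₂ : (1 - δ) * a / (1 + a) < (1 - δ) * b / (1 + b) := by
    rw [div_lt_div_iff₀ (by linarith) (by linarith)]
    nlinarith [mul_pos (by linarith : (0 : ℝ) < 1 - δ) (by linarith : 0 < b - a)]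
  simp only [Dlt]
  linarith

lemma tau2star_mem_Ioo (hδ₀ : -1 < δ) (hδ₁ : δ < 1) (hp : 0 ≤ p) : tau2star p δ ∈ Ioo (-1) 2 :=
  ⟨lt_min (neg_one_lt_tau2aux hδ₀ hδ₁ hp) (by norm_num), (min_le_right _ _).trans_lt (by norm_num)⟩

lemma continuousOn_tau2star (hδ₀ : -1 < δ) (hδ₁ : δ < 1) :
    ContinuousOn (tau2star · δ) (Ici 0) := by
  have h1 : Continuous (ah1 · δ) := by
    simp only [ah1_eq_sqrt hδ₀.le]
    fun_prop
  have h2 : Continuous (ah2 · δ) := by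
    unfold ah2
    fun_prop
  have hne : ∀ p ∈ Ici (0 : ℝ), ah1 p δ + ah2 p δ ≠ 0 := fun p hp =>
    (add_pos_of_nonneg_of_pos (ah1_nonneg p δ) (ah2_pos hδ₀ hδ₁ hp)).ne'
  exact (continuous_id.min continuous_const).comp_continuousOn
    (((continuous_const.mul h2).sub h1).continuousOn.div (h1.add h2).continuousOn hne)

lemma continuousOn_omega : ContinuousOn (omega · δ) (Ioo (-1) 2) := by
  intro τ ⟨h₁, h₂⟩
  apply ContinuousAt.continuousWithinAt
  unfold omega
  fun_prop (disch := (apply ne_of_gt; linarith))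

lemma continuousOn_Dlt : ContinuousOn (Dlt · δ) (Ioo (-1) 2) := by
  intro τ ⟨h₁, h₂⟩
  apply ContinuousAt.continuousWithinAt
  unfold Dlt
  fun_prop (disch := (apply ne_of_gt; linarith))

lemma continuousOn_W (hδ₀ : -1 < δ) (hδ₁ : δ < 1) : ContinuousOn (W · δ) (Ici 0) :=
  continuousOn_omega.comp (continuousOn_tau2star hδ₀ hδ₁) fun _ hp =>
    tau2star_mem_Ioo hδ₀ hδ₁ hp

lemma continuousOn_Ineq (hδ₀ : -1 < δ) (hδ₁ : δ < 1) : ContinuousOn (Ineq · δ) (Ici 0) :=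
  (continuousOn_Dlt.comp (continuousOn_tau2star hδ₀ hδ₁) fun _ hp =>
    tau2star_mem_Ioo hδ₀ hδ₁ hp).abs

lemma Dlt_div_eq {a b : ℝ} (ha : 0 < a) (hb : 0 < b) :
    Dlt ((2 * b - a) / (a + b)) δ
      = ((1 + δ) * (2 * a - b) * b - (1 - δ) * (2 * b - a) * a) / (3 * a * b) := by
  have hab : a + b ≠ 0 := by positivity
  have h₁ : 1 - (2 * b - a) / (a + b) = (2 * a - b) / (a + b) := by field_simp; ring
  have h₂ : 2 - (2 * b - a) / (a + b) = 3 * a / (a + b) := by field_simp; ring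
  have h₃ : 1 + (2 * b - a) / (a + b) = 3 * b / (a + b) := by field_simp; ring
  rw [Dlt, h₁, h₂, h₃]
  field_simp

/-- The threshold `p̂(δ)`: `Δ(τ₂^aux(p, δ), δ)` changes sign at `p = p̂(δ)`. -/
def pHat (δ : ℝ) : ℝ := δ * (1 / √(1 + 3 * δ ^ 2) - 1 / 2)

lemma pHat_nonneg (hδ₀ : 0 ≤ δ) (hδ₁ : δ ≤ 1) : 0 ≤ pHat δ := by
  refine mul_nonneg hδ₀ (sub_nonneg.2 (one_div_le_one_div_of_le (by positivity) ?_))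
  rw [Real.sqrt_le_left zero_le_two]
  nlinarith

lemma pHat_lt_iff (hδ : 0 ≤ δ) (hp : 0 < 2 * p + δ) :
    pHat δ < p ↔ 4 * δ ^ 2 < (2 * p + δ) ^ 2 * (1 + 3 * δ ^ 2) := by
  have hr : 0 < √(1 + 3 * δ ^ 2) := Real.sqrt_pos.2 (by positivity)
  have hr2 : √(1 + 3 * δ ^ 2) ^ 2 = 1 + 3 * δ ^ 2 := Real.sq_sqrt (by positivity)
  calc pHat δ < p ↔ 2 * δ < (2 * p + δ) * √(1 + 3 * δ ^ 2) := by
        rw [pHat, mul_sub, mul_one_div, sub_lt_iff_lt_add, div_lt_iff₀ hr]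
        constructor <;> intro h <;> linarith
    _ ↔ (2 * δ) ^ 2 < ((2 * p + δ) * √(1 + 3 * δ ^ 2)) ^ 2 :=
        (pow_lt_pow_iff_left₀ (by positivity) (by positivity) two_ne_zero).symm
    _ ↔ _ := by rw [mul_pow (2 * p + δ), hr2, mul_pow]; norm_num

lemma pHat_lt_of_mul_eq (hδ₀ : 0 < δ) (hδ₁ : δ < 1) (hp : p * (10 + 6 * δ) = 3 * (1 - δ ^ 2)) :
    pHat δ < p := by
  have hp' : 2 * p + δ = (3 + 5 * δ) / (5 + 3 * δ) := by
    field_simp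
    linear_combination hp
  rw [pHat_lt_iff hδ₀.le (by rw [hp']; positivity), hp', div_pow, div_mul_eq_mul_div,
    lt_div_iff₀ (by positivity)]
  have : 0 < 3 * (1 - δ) ^ 2 * (1 + δ) * (3 + 13 * δ) := by
    have : 0 < 1 - δ := by linarith
    positivity
  nlinarith

/-- Multiplying `Δ` at `τ₂^aux` by `3 α̂₁ α̂₂ > 0` leaves `4 δ α̂₁ α̂₂ - (1 - δ²)(2p + δ)/2`; the
hypothesis is the squared form of `8 δ α̂₁ α̂₂ < (1 - δ²)(2p + δ)`. -/
lemma Dlt_tau2aux_neg (hδ₀ : 0 < δ) (hδ₁ : δ < 1) (hp₀ : 0 ≤ p) (hp : p < (1 - δ) / 2)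
    (h : 4 * δ ^ 2 < (2 * p + δ) ^ 2 * (1 + 3 * δ ^ 2)) : Dlt (tau2aux p δ) δ < 0 := by
  have ha := ah1_pos (by linarith) hp
  have hb := ah2_pos (by linarith) hδ₁ hp₀
  have ha2 := four_mul_ah1_sq (by linarith) hp.le
  have hb2 := four_mul_ah2_sq (by linarith) hδ₁.le hp₀
  set a := ah1 p δ
  set b := ah2 p δ
  have key : 8 * δ * (a * b) < (1 - δ ^ 2) * (2 * p + δ) := by
    refine lt_of_pow_lt_pow_left₀ 2 (by nlinarith) ?_
    have hsq : (8 * δ * (a * b)) ^ 2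
        = 4 * δ ^ 2 * ((1 - δ ^ 2) * (1 - (2 * p + δ) ^ 2)) := by
      linear_combination (4 * δ ^ 2 * (4 * b ^ 2)) * ha2
        + (4 * δ ^ 2 * (1 + δ) * (1 - 2 * p - δ)) * hb2
    rw [hsq]
    nlinarith [mul_pos (by nlinarith : (0 : ℝ) < 1 - δ ^ 2)
      (by linarith : 0 < (2 * p + δ) ^ 2 * (1 + 3 * δ ^ 2) - 4 * δ ^ 2)]
  have hnum : (1 + δ) * (2 * a - b) * b - (1 - δ) * (2 * b - a) * a
      = 4 * δ * (a * b) - (1 - δ ^ 2) * (2 * p + δ) / 2 := by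
    linear_combination (-(1 + δ) / 4) * hb2 + ((1 - δ) / 4) * ha2
  rw [tau2aux, Dlt_div_eq ha hb, hnum]
  exact div_neg_of_neg_of_pos (by linarith) (by positivity)

section Threshold

variable {paux : ℝ}

lemma tau2aux_mapsTo_Icc (hδ₀ : -1 < δ) (hδ₁ : δ < 1) (hpaux : paux < (1 - δ) / 2)
    (hpaux1 : tau2aux paux δ = 1) : MapsTo (tau2aux · δ) (Icc 0 paux) (Icc (1 / 2) 1) := by
  intro p ⟨hp₀, hp⟩
  have hmono := (tau2aux_strictMonoOn hδ₀ hδ₁).monotoneOn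
  refine ⟨?_, ?_⟩
  · rw [← tau2aux_zero hδ₀ hδ₁]
    exact hmono ⟨le_rfl, by linarith⟩ ⟨hp₀, by linarith⟩ hp₀
  · rw [← hpaux1]
    exact hmono ⟨hp₀, by linarith⟩ ⟨hp₀.trans hp, hpaux⟩ hp

lemma tau2star_eqOn (hδ₀ : -1 < δ) (hδ₁ : δ < 1) (hpaux : paux < (1 - δ) / 2)
    (hpaux1 : tau2aux paux δ = 1) : EqOn (tau2star · δ) (tau2aux · δ) (Icc 0 paux) :=
  fun _ hp => min_eq_left (tau2aux_mapsTo_Icc hδ₀ hδ₁ hpaux hpaux1 hp).2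

lemma tau2star_eq_one (hδ₀ : -1 < δ) (hδ₁ : δ < 1) (hpaux₀ : 0 ≤ paux)
    (hpaux : paux < (1 - δ) / 2) (hpaux1 : tau2aux paux δ = 1) (hp : paux ≤ p) :
    tau2star p δ = 1 := by
  rcases lt_or_ge p ((1 - δ) / 2) with h | h
  · refine min_eq_right ?_
    rw [← hpaux1]
    exact (tau2aux_strictMonoOn hδ₀ hδ₁).monotoneOn ⟨hpaux₀, hpaux⟩ ⟨hpaux₀.trans hp, h⟩ hp
  · rw [tau2star, tau2aux_of_le hδ₀ hδ₁ h]
    norm_num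

lemma W_strictAntiOn (hδ₀ : -1 < δ) (hδ₁ : δ < 1) (hpaux : paux < (1 - δ) / 2)
    (hpaux1 : tau2aux paux δ = 1) : StrictAntiOn (W · δ) (Icc 0 paux) := by
  have hsub : Icc 0 paux ⊆ Ico 0 ((1 - δ) / 2) := fun _ hp => ⟨hp.1, hp.2.trans_lt hpaux⟩
  refine ((omega_strictAntiOn hδ₀ hδ₁).comp_strictMonoOn
    ((tau2aux_strictMonoOn hδ₀ hδ₁).mono hsub) (tau2aux_mapsTo_Icc hδ₀ hδ₁ hpaux hpaux1)).congr ?_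
  intro p hp
  simp only [Function.comp, W, tau2star_eqOn hδ₀ hδ₁ hpaux hpaux1 hp]

lemma Ineq_strictMonoOn (hδ₀ : 0 < δ) (hδ₁ : δ < 1) (hpaux : paux < (1 - δ) / 2)
    (hpaux1 : tau2aux paux δ = 1) : StrictMonoOn (Ineq · δ) (Ioo (pHat δ) paux) := by
  have hδ' : -1 < δ := by linarith
  have hsub : Ioo (pHat δ) paux ⊆ Icc 0 paux := fun _ hp =>
    ⟨(pHat_nonneg hδ₀.le hδ₁.le).trans hp.1.le, hp.2.le⟩
  have hneg : ∀ p ∈ Ioo (pHat δ) paux, Dlt (tau2aux p δ) δ < 0 := fun p hp =>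
    Dlt_tau2aux_neg hδ₀ hδ₁ (hsub hp).1 (hp.2.trans hpaux)
      ((pHat_lt_iff hδ₀.le (by linarith [(hsub hp).1])).1 hp.1)
  have hmem : ∀ p ∈ Ioo (pHat δ) paux, tau2aux p δ ∈ Ioo (-1) 2 := fun p hp =>
    have h := tau2aux_mapsTo_Icc hδ' hδ₁ hpaux hpaux1 (hsub hp)
    ⟨by linarith [h.1], by linarith [h.2]⟩
  intro x hx y hy hxy
  simp only [Ineq, tau2star_eqOn hδ' hδ₁ hpaux hpaux1 (hsub hx),
    tau2star_eqOn hδ' hδ₁ hpaux hpaux1 (hsub hy), abs_of_neg (hneg x hx), abs_of_neg (hneg y hy),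
    neg_lt_neg_iff]
  exact Dlt_strictAntiOn hδ' hδ₁ (hmem x hx) (hmem y hy) <|
    tau2aux_strictMonoOn hδ' hδ₁ ⟨(hsub hx).1, hx.2.trans hpaux⟩ ⟨(hsub hy).1, hy.2.trans hpaux⟩ hxy

end Threshold

theorem stmt_16_general (δ paux : ℝ) (hδ : δ ∈ Set.Ioo (0 : ℝ) 1)
    (hpaux : paux ∈ Set.Ioo (0 : ℝ) ((1 - δ) / 2))
    (hpaux1 : tau2aux paux δ = 1) :
    let phat : ℝ := δ * (1 / Real.sqrt (1 + 3 * δ ^ 2) - 1 / 2)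
    phat < paux ∧
    ContinuousOn (fun p => W p δ) (Set.Ico (0 : ℝ) 1) ∧
    ContinuousOn (fun p => Ineq p δ) (Set.Ico (0 : ℝ) 1) ∧
    StrictAntiOn (fun p => W p δ) (Set.Ioo phat paux) ∧
    StrictMonoOn (fun p => Ineq p δ) (Set.Ioo phat paux) ∧
    (∀ p ∈ Set.Ico paux (1 : ℝ), W p δ = W paux δ ∧ Ineq p δ = Ineq paux δ) := by
  obtain ⟨hδ₀, hδ₁⟩ := hδ
  obtain ⟨hpaux₀, hpaux⟩ := hpaux
  have hδ' : -1 < δ := by linarith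
  have hone : ∀ p, paux ≤ p → tau2star p δ = 1 := fun _ =>
    tau2star_eq_one hδ' hδ₁ hpaux₀.le hpaux hpaux1
  refine ⟨pHat_lt_of_mul_eq hδ₀ hδ₁ (mul_eq_of_tau2aux_eq_one hδ' hδ₁ hpaux₀.le hpaux hpaux1),
    (continuousOn_W hδ' hδ₁).mono Ico_subset_Ici_self,
    (continuousOn_Ineq hδ' hδ₁).mono Ico_subset_Ici_self,
    (W_strictAntiOn hδ' hδ₁ hpaux hpaux1).mono fun _ hp =>
      ⟨(pHat_nonneg hδ₀.le hδ₁.le).trans hp.1.le, hp.2.le⟩,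
    Ineq_strictMonoOn hδ₀ hδ₁ hpaux hpaux1, fun p hp => ?_⟩
  simp only [W, Ineq, hone p hp.1, hone paux le_rfl, and_self]

/-- Lemma 7 of the paper.  Here `paux` is the threshold partiality
level `p^aux(δ) ∈ (0, (1−δ)/2)`, i.e. the unique level at which the advisor's
allocation to group 2 reaches the full budget (`τ₂^aux(p^aux, δ) = 1`, so that
`τ₂*(p^aux, δ) = 1`).  Then `p̂(δ) < p^aux(δ)`; welfare and inequality are
continuous in `p` on `[0,1)`; on `(p̂(δ), p^aux(δ))` welfare is strictly
decreasing while inequality is strictly increasing; and both are constant on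
`[p^aux(δ), 1)`. -/
theorem stmt_16 (δ paux : ℝ) (hδ : δ ∈ Set.Ioo (0 : ℝ) 1)
    (hpaux : paux ∈ Set.Ioo (0 : ℝ) ((1 - δ) / 2))
    (hpaux1 : tau2aux paux δ = 1)
    (hpauxu : ∀ q ∈ Set.Ioo (0 : ℝ) ((1 - δ) / 2), tau2aux q δ = 1 → q = paux) :
    let phat : ℝ := δ * (1 / Real.sqrt (1 + 3 * δ ^ 2) - 1 / 2)
    phat < paux ∧
    ContinuousOn (fun p => W p δ) (Set.Ico (0 : ℝ) 1) ∧
    ContinuousOn (fun p => Ineq p δ) (Set.Ico (0 : ℝ) 1) ∧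
    StrictAntiOn (fun p => W p δ) (Set.Ioo phat paux) ∧
    StrictMonoOn (fun p => Ineq p δ) (Set.Ioo phat paux) ∧
    (∀ p ∈ Set.Ico paux (1 : ℝ), W p δ = W paux δ ∧ Ineq p δ = Ineq paux δ) :=
  stmt_16_general δ paux hδ hpaux hpaux1
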